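/- Margulis' non-properness criterion for opposite signs: if γ, η are hyperbolic affine isometries of R^{2,1} with α(γ) > 0 and α(η) < 0 (or vice versa), then the group ⟨γ, η⟩ does not act properly discontinuously on R^{2,1}. -/

import Mathlib

noncomputable section

/-- The Lorentzian bilinear form of signature (2,1) on ℝ³. -/
def ldot (x y : Fin 3 → ℝ) : ℝ := x 0 * y 0 + x 1 * y 1 - x 2 * y 2

/-- The Lorentz cross-product, the unique bilinear map with ⟨u, v ⊠ w⟩ = det[u v w]. -/
def lcross (v w : Fin 3 → ℝ) : Fin 3 → ℝ :=
  ![v 1 * w 2 - v 2 * w 1, v 2 * w 0 - v 0 * w 2, -(v 0 * w 1 - v 1 * w 0)]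

/-- Determinant of the 3×3 matrix with columns x, y, z. -/
def det3 (x y z : Fin 3 → ℝ) : ℝ := (Matrix.transpose (Matrix.of ![x, y, z])).det

/-- Membership in SO(2,1)⁰: preserves the Lorentzian form, has determinant 1,
and preserves the future lightcone. -/
def IsSOplus (g : Matrix (Fin 3) (Fin 3) ℝ) : Prop :=
  (∀ x y : Fin 3 → ℝ, ldot (g.mulVec x) (g.mulVec y) = ldot x y) ∧
  g.det = 1 ∧
  (∀ x : Fin 3 → ℝ, ldot x x = 0 → x ≠ 0 → x 2 > 0 → (g.mulVec x) 2 > 0)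

/-- c is a (real) eigenvalue of the 3×3 matrix g. -/
def IsEigenvalue (g : Matrix (Fin 3) (Fin 3) ℝ) (c : ℝ) : Prop :=
  ∃ v : Fin 3 → ℝ, v ≠ 0 ∧ g.mulVec v = c • v

/-- x has Euclidean length one. -/
def EuclUnit (x : Fin 3 → ℝ) : Prop := x 0 ^ 2 + x 1 ^ 2 + x 2 ^ 2 = 1

/-- A future-pointing lightlike vector. -/
def IsFutureNull (x : Fin 3 → ℝ) : Prop := ldot x x = 0 ∧ x 2 > 0

/-- The null frame of a hyperbolic g ∈ SO(2,1)⁰ : x0 is the unit-spacelike 1-eigenvector,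
xm and xp are future-pointing Euclidean-unit eigenvectors for the eigenvalues λ and λ⁻¹
with 0 < λ < 1, and (x0, xm, xp) is positively oriented.  These conditions determine
x0 = x⁰(g), xm = x⁻(g), xp = x⁺(g) uniquely. -/
def IsNullFrameOf (g : Matrix (Fin 3) (Fin 3) ℝ) (x0 xm xp : Fin 3 → ℝ) : Prop :=
  g.mulVec x0 = x0 ∧ ldot x0 x0 = 1 ∧
  IsFutureNull xm ∧ EuclUnit xm ∧ IsFutureNull xp ∧ EuclUnit xp ∧
  ∃ l : ℝ, 0 < l ∧ l < 1 ∧ g.mulVec xm = l • xm ∧ g.mulVec xp = l⁻¹ • xp ∧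
    det3 x0 xm xp > 0

/-- g is hyperbolic: it admits three distinct real eigenvalues. -/
def IsHyperbolic (g : Matrix (Fin 3) (Fin 3) ℝ) : Prop :=
  ∃ a b c : ℝ, a ≠ b ∧ b ≠ c ∧ a ≠ c ∧
    IsEigenvalue g a ∧ IsEigenvalue g b ∧ IsEigenvalue g c

/-!
Let `γ` have axis point `p`, null frame `(A, m, P)`, contraction rate `λ` and Margulis invariant
`α > 0`, and `η` likewise `q`, `(B, m', P')`, `μ` and `β < 0`; replacing `η` by `η⁻¹` (which has
the same invariant) we may assume `⟨m, P'⟩ ≠ 0`. Then the plane `p + span(A, m)`, on which `γ`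
acts by `(a, d) ↦ (a + α, λ d)`, meets the plane `q + span(B, P')`, on which `η⁻¹` acts by
`(b, c) ↦ (b - β, μ c)`, in a line along which the `A`- and `B`-coordinates increase together;
the sign comes from the Lorentzian cross products `A ⊠ m ∈ ℝ₋ m` and `B ⊠ P' ∈ ℝ₊ P'`.
Let `rₙ` be the point of that line with `B`-coordinate `nβ`. Then `η⁻ⁿ rₙ` stays bounded, while
the `A`-coordinate `aₙ` of `rₙ` tends to `-∞` linearly, so that `γ^Mₙ rₙ` with
`Mₙ = ⌈-aₙ / α⌉` stays bounded as well. Hence infinitely many elements `γ^Mₙ ηⁿ` move some point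
of a fixed ball into that ball; they are distinct because `λ^a μ^b ≠ 1` for `a > 0`.
-/

open Matrix

section LorentzAlgebra

variable (x y z u v w : Fin 3 → ℝ) (a : ℝ)

theorem ldot_comm : ldot x y = ldot y x := by
  simp only [ldot]; ring

@[simp] theorem ldot_add_left : ldot (x + y) z = ldot x z + ldot y z := by
  simp only [ldot, Pi.add_apply]; ring

@[simp] theorem ldot_add_right : ldot x (y + z) = ldot x y + ldot x z := by
  simp only [ldot, Pi.add_apply]; ring

@[simp] theorem ldot_sub_left : ldot (x - y) z = ldot x z - ldot y z := by
  simp only [ldot, Pi.sub_apply]; ring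

@[simp] theorem ldot_sub_right : ldot x (y - z) = ldot x y - ldot x z := by
  simp only [ldot, Pi.sub_apply]; ring

@[simp] theorem ldot_smul_left : ldot (a • x) y = a * ldot x y := by
  simp only [ldot, Pi.smul_apply, smul_eq_mul]; ring

@[simp] theorem ldot_smul_right : ldot x (a • y) = a * ldot x y := by
  simp only [ldot, Pi.smul_apply, smul_eq_mul]; ring

@[simp] theorem ldot_neg_left : ldot (-x) y = -ldot x y := by
  simp only [ldot, Pi.neg_apply]; ring

@[simp] theorem ldot_neg_right : ldot x (-y) = -ldot x y := by
  simp only [ldot, Pi.neg_apply]; ring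

theorem det3_eq : det3 x y z =
    x 0 * (y 1 * z 2 - y 2 * z 1) - y 0 * (x 1 * z 2 - x 2 * z 1) +
      z 0 * (x 1 * y 2 - x 2 * y 1) := by
  simp [det3, det_fin_three]
  ring

theorem det3_smul_eq_add : det3 u v w • z = det3 z v w • u + det3 u z w • v + det3 u v z • w := by
  funext i
  fin_cases i <;> simp [det3_eq] <;> ring

theorem ldot_lcross : ldot (lcross v w) u = det3 u v w := by
  simp [ldot, lcross, det3_eq]; ring

theorem ldot_lcross_lcross :
    ldot (lcross x y) (lcross z w) = ldot x w * ldot y z - ldot x z * ldot y w := by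
  simp [ldot, lcross]; ring

theorem eq_zero_of_forall_ldot_eq_zero (h : ∀ y, ldot x y = 0) : x = 0 := by
  have h0 := h ![1, 0, 0]
  have h1 := h ![0, 1, 0]
  have h2 := h ![0, 0, 1]
  simp only [ldot, cons_val] at h0 h1 h2
  funext i
  fin_cases i <;> simp <;> linarith

variable {x y u v w}

theorem eq_zero_of_ldot_eq_zero_of_det3_ne_zero (hD : det3 u v w ≠ 0)
    (hu : ldot x u = 0) (hv : ldot x v = 0) (hw : ldot x w = 0) : x = 0 := by
  refine eq_zero_of_forall_ldot_eq_zero x fun y => ?_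
  have h := congrArg (ldot x) (det3_smul_eq_add y u v w)
  rw [ldot_smul_right, ldot_add_right, ldot_add_right, ldot_smul_right, ldot_smul_right,
    ldot_smul_right, hu, hv, hw] at h
  simpa [hD] using h

end LorentzAlgebra

section NullVectors

variable {x y z : Fin 3 → ℝ}

theorem IsFutureNull.ldot_nonpos (hx : IsFutureNull x) (hy : IsFutureNull y) : ldot x y ≤ 0 := by
  obtain ⟨hxx, hx2⟩ := hx
  obtain ⟨hyy, hy2⟩ := hy
  simp only [ldot] at hxx hyy ⊢
  nlinarith [sq_nonneg (x 0 * y 1 - x 1 * y 0), mul_pos hx2 hy2,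
    sq_nonneg (x 0 * y 0 + x 1 * y 1 + x 2 * y 2)]

theorem IsFutureNull.eq_smul_of_ldot_eq_zero (hx : IsFutureNull x) (hy : IsFutureNull y)
    (hxy : ldot x y = 0) : y = (y 2 / x 2) • x := by
  obtain ⟨hxx, hx2⟩ := hx
  obtain ⟨hyy, -⟩ := hy
  simp only [ldot] at hxx hyy hxy
  have hc : x 0 * y 1 - x 1 * y 0 = 0 := by
    apply pow_eq_zero_iff (n := 2) two_ne_zero |>.1
    linear_combination (y 0 * y 0 + y 1 * y 1) * hxx + x 2 * x 2 * hyy -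
      (x 0 * y 0 + x 1 * y 1 + x 2 * y 2) * hxy
  have h0 : x 2 * (y 0 * x 2 - y 2 * x 0) = 0 := by
    linear_combination x 0 * hxy - y 0 * hxx - x 1 * hc
  have h1 : x 2 * (y 1 * x 2 - y 2 * x 1) = 0 := by
    linear_combination x 1 * hxy - y 1 * hxx + x 0 * hc
  funext i
  fin_cases i <;> simp <;> field_simp
  · exact sub_eq_zero.1 ((mul_eq_zero.1 h0).resolve_left hx2.ne')
  · exact sub_eq_zero.1 ((mul_eq_zero.1 h1).resolve_left hx2.ne')

theorem IsFutureNull.ldot_ne_zero_of_ldot_eq_zero (hx : IsFutureNull x) (hy : IsFutureNull y)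
    (hz : IsFutureNull z) (hyz : ldot y z ≠ 0) (hxz : ldot x z = 0) : ldot x y ≠ 0 := by
  intro hxy
  apply hyz
  rw [hx.eq_smul_of_ldot_eq_zero hy hxy, hx.eq_smul_of_ldot_eq_zero hz hxz]
  simp [hx.1]

end NullVectors

/-- The shape of a null frame `(x⁰, x⁻, x⁺)` as in `IsNullFrameOf`, with no reference to a matrix
and no Euclidean normalisation of the null vectors. -/
structure IsLorentzFrame (A m P : Fin 3 → ℝ) : Prop where
  ldot_self : ldot A A = 1
  ldot_m : ldot A m = 0
  ldot_P : ldot A P = 0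
  null_m : IsFutureNull m
  null_P : IsFutureNull P
  det3_pos : 0 < det3 A m P

namespace IsLorentzFrame

variable {A m P : Fin 3 → ℝ} (hF : IsLorentzFrame A m P)
include hF

theorem ldot_m_P_neg : ldot m P < 0 := by
  refine (hF.null_m.ldot_nonpos hF.null_P).lt_of_ne fun h => hF.det3_pos.ne' ?_
  rw [hF.null_m.eq_smul_of_ldot_eq_zero hF.null_P h, det3_eq]
  simp only [Pi.smul_apply, smul_eq_mul]
  ring

theorem expand (z : Fin 3 → ℝ) :
    z = ldot z A • A + (ldot z P / ldot m P) • m + (ldot z m / ldot m P) • P := by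
  have hk := hF.ldot_m_P_neg.ne
  have hmA : ldot m A = 0 := by rw [ldot_comm]; exact hF.ldot_m
  have hPA : ldot P A = 0 := by rw [ldot_comm]; exact hF.ldot_P
  rw [← sub_eq_zero]
  refine eq_zero_of_ldot_eq_zero_of_det3_ne_zero hF.det3_pos.ne' ?_ ?_ ?_ <;>
    simp only [ldot_sub_left, ldot_add_left, ldot_smul_left, hF.ldot_self, hF.ldot_m, hF.ldot_P,
      hmA, hPA, hF.null_m.1, hF.null_P.1, ldot_comm P m] <;>
    field_simp <;> ring

theorem lcross_m : lcross A m = (det3 A m P / ldot m P) • m := by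
  have hA : det3 A A m = 0 := by rw [det3_eq]; ring
  have hm : det3 m A m = 0 := by rw [det3_eq]; ring
  have hP : det3 P A m = det3 A m P := by simp only [det3_eq]; ring
  rw [hF.expand (lcross A m), ldot_lcross, ldot_lcross, ldot_lcross, hA, hm, hP]
  simp

theorem lcross_P : lcross A P = -(det3 A m P / ldot m P) • P := by
  have hA : det3 A A P = 0 := by rw [det3_eq]; ring
  have hm : det3 m A P = -det3 A m P := by simp only [det3_eq]; ring
  have hP : det3 P A P = 0 := by rw [det3_eq]; ring
  rw [hF.expand (lcross A P), ldot_lcross, ldot_lcross, ldot_lcross, hA, hm, hP]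
  simp [neg_div]

theorem neg_swap : IsLorentzFrame (-A) P m where
  ldot_self := by simp [hF.ldot_self]
  ldot_m := by simp [hF.ldot_P]
  ldot_P := by simp [hF.ldot_m]
  null_m := hF.null_P
  null_P := hF.null_m
  det3_pos := by
    convert hF.det3_pos using 1
    simp only [det3_eq, Pi.neg_apply]
    ring

end IsLorentzFrame

theorem IsLorentzFrame.ldot_transverse_pos {A m P B m' P' : Fin 3 → ℝ}
    (hF : IsLorentzFrame A m P) (hF' : IsLorentzFrame B m' P') (hk : ldot m P' ≠ 0) :
    0 < ldot A (B - (ldot m B / ldot m P') • P') := by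
  -- Both factors below are negative: `A ⊠ m` is a negative multiple of `m`, and `B ⊠ P'` a
  -- positive multiple of `P'`.
  have h := ldot_lcross_lcross A m B P'
  rw [hF.lcross_m, hF'.lcross_P, ldot_smul_left, ldot_smul_right] at h
  have key : ldot A (B - (ldot m B / ldot m P') • P') =
      (det3 A m P / ldot m P) * (det3 B m' P' / ldot m' P') := by
    have := hF.ldot_m_P_neg.ne
    have := hF'.ldot_m_P_neg.ne
    rw [ldot_sub_right, ldot_smul_right]
    field_simp at h ⊢
    linear_combination h
  rw [key]
  exact mul_pos_of_neg_of_neg (div_neg_of_pos_of_neg hF.det3_pos hF.ldot_m_P_neg)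
    (div_neg_of_pos_of_neg hF'.det3_pos hF'.ldot_m_P_neg)

/-- The plane `p + span(A, m)` meets the plane `q + span(B, P')` in a line, on which the
`A`-coordinate `a₀ + s σ` increases with the `B`-coordinate `s`. -/
theorem IsLorentzFrame.exists_common_line {A m P B m' P' : Fin 3 → ℝ}
    (hF : IsLorentzFrame A m P) (hF' : IsLorentzFrame B m' P') (hk : ldot m P' ≠ 0)
    (p q : Fin 3 → ℝ) :
    ∃ σ > 0, ∃ a₀ c₀ ε d₀ τ : ℝ, ∀ s : ℝ,
      q + s • B + (c₀ + s * ε) • P' = p + (a₀ + s * σ) • A + (d₀ + (a₀ + s * σ) * τ) • m := by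
  have hσ := hF.ldot_transverse_pos hF' hk
  set σ := ldot A (B - (ldot m B / ldot m P') • P')
  set ε := -(ldot m B / ldot m P')
  set c₀ := -(ldot m (q - p) / ldot m P')
  set a₀ := ldot A (q - p + c₀ • P')
  set D₀ := ldot (q - p + c₀ • P') P / ldot m P
  set D₁ := ldot (B + ε • P') P / ldot m P
  refine ⟨σ, hσ, a₀, c₀, ε, D₀ - a₀ * (D₁ / σ), D₁ / σ, fun s => ?_⟩
  set z := q + s • B + (c₀ + s * ε) • P' - p
  have hz := hF.expand z
  have hzm : ldot z m = 0 := by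
    simp only [z, c₀, ε, ldot_comm _ m, ldot_sub_right, ldot_add_right, ldot_smul_right]
    field_simp
    ring
  have hzA : ldot z A = a₀ + s * σ := by
    simp only [z, a₀, σ, ε, ldot_comm _ A, ldot_sub_right, ldot_add_right, ldot_smul_right]
    ring
  have hzP : ldot z P / ldot m P = D₀ - a₀ * (D₁ / σ) + (a₀ + s * σ) * (D₁ / σ) := by
    simp only [z, D₀, D₁, ldot_sub_left, ldot_add_left, ldot_smul_left]
    field_simp
    ring
  rw [hzA, hzP, hzm, zero_div, zero_smul, add_zero] at hz
  rw [add_assoc p, ← hz, add_sub_cancel]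

def PreservesLdot (g : Matrix (Fin 3) (Fin 3) ℝ) : Prop :=
  ∀ x y, ldot (g *ᵥ x) (g *ᵥ y) = ldot x y

section Isometries

variable {g : Matrix (Fin 3) (Fin 3) ℝ} {x y v : Fin 3 → ℝ} {a b : ℝ}

theorem PreservesLdot.pow (hg : PreservesLdot g) (n : ℕ) : PreservesLdot (g ^ n) := by
  induction n with
  | zero => simp [PreservesLdot]
  | succ n ih => intro x y; rw [pow_succ, ← mulVec_mulVec, ← mulVec_mulVec, ih, hg]

theorem PreservesLdot.ldot_eq_zero_of_mulVec_eq_smul (hg : PreservesLdot g)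
    (hx : g *ᵥ x = a • x) (hy : g *ᵥ y = b • y) (hab : a * b ≠ 1) : ldot x y = 0 := by
  have h := hg x y
  rw [hx, hy, ldot_smul_left, ldot_smul_right] at h
  have : (a * b - 1) * ldot x y = 0 := by linear_combination h
  exact (mul_eq_zero.1 this).resolve_left (sub_ne_zero.2 hab)

theorem pow_mulVec_eq_smul (hx : g *ᵥ x = a • x) (n : ℕ) : (g ^ n) *ᵥ x = a ^ n • x := by
  induction n with
  | zero => simp
  | succ n ih =>
    rw [pow_succ, ← mulVec_mulVec, hx, mulVec_smul, ih, smul_smul, pow_succ']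

theorem exists_pow_apply_eq_mulVec_add {γ : Equiv.Perm (Fin 3 → ℝ)}
    (hγ : ∀ x, γ x = g *ᵥ x + v) (n : ℕ) : ∃ u, ∀ x, (γ ^ n) x = (g ^ n) *ᵥ x + u := by
  induction n with
  | zero => exact ⟨0, by simp⟩
  | succ n ih =>
    obtain ⟨u, hu⟩ := ih
    refine ⟨g *ᵥ u + v, fun x => ?_⟩
    rw [pow_succ', Equiv.Perm.mul_apply, hu, hγ, mulVec_add, pow_succ',
      ← mulVec_mulVec, add_assoc]

end Isometries

open Filter in
theorem exists_strictMono_subseq_natCeil {a : ℕ → ℝ} {α : ℝ} (hα : 0 < α)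
    (ha : Tendsto a atTop atBot) :
    ∃ φ : ℕ → ℕ, StrictMono φ ∧ StrictMono (fun k => ⌈-a (φ k) / α⌉₊) ∧ ∀ k, a (φ k) ≤ 0 := by
  obtain ⟨ψ, hψ, haψ⟩ := extraction_of_eventually_atTop (ha.eventually_le_atBot 0)
  obtain ⟨χ, hχ, hMχ⟩ := strictMono_subseq_of_tendsto_atTop (u := fun k => ⌈-a (ψ k) / α⌉₊)
    (tendsto_nat_ceil_atTop.comp
      (((tendsto_neg_atBot_atTop.comp ha).atTop_div_const hα).comp hψ.tendsto_atTop))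
  exact ⟨ψ ∘ χ, hψ.comp hχ, hMχ, fun k => haψ (χ k)⟩

theorem add_natCeil_neg_div_mul_mem_Ico {a α : ℝ} (hα : 0 < α) (ha : a ≤ 0) :
    a + ⌈-a / α⌉₊ * α ∈ Set.Ico 0 α := by
  have h1 := Nat.le_ceil (-a / α)
  have h2 := Nat.ceil_lt_add_one (div_nonneg (neg_nonneg.2 ha) hα.le)
  rw [div_le_iff₀ hα] at h1
  rw [← sub_lt_iff_lt_add, lt_div_iff₀ hα] at h2
  constructor <;> nlinarith

theorem exists_natCast_mul_pow_le {r : ℝ} (h0 : 0 ≤ r) (h1 : r < 1) :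
    ∃ C, ∀ n : ℕ, n * r ^ n ≤ C := by
  obtain ⟨C, hC⟩ := (tendsto_self_mul_const_pow_of_lt_one h0 h1).bddAbove_range
  exact ⟨C, fun n => hC ⟨n, rfl⟩⟩

theorem abs_pow_mul_add_le {r C u U : ℝ} (h0 : 0 ≤ r) (h1 : r ≤ 1)
    (hC : ∀ n : ℕ, n * r ^ n ≤ C) (hu : |u| ≤ U) (n : ℕ) (c : ℝ) :
    |r ^ n * (u + n * c)| ≤ U + |c| * C := by
  have hrn : 0 ≤ r ^ n := pow_nonneg h0 n
  calc |r ^ n * (u + n * c)| = |r ^ n * u + c * (n * r ^ n)| := by ring_nf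
    _ ≤ r ^ n * |u| + |c| * (n * r ^ n) := by
      refine (abs_add_le _ _).trans_eq ?_
      rw [abs_mul, abs_mul, abs_of_nonneg hrn, abs_of_nonneg (mul_nonneg n.cast_nonneg hrn)]
    _ ≤ 1 * U + |c| * C := by gcongr <;> [exact pow_le_one₀ h0 h1; exact hC n]
    _ = U + |c| * C := by ring

section NormBounds

variable {E : Type*} [SeminormedAddCommGroup E] [NormedSpace ℝ E] {r C : ℝ}

theorem norm_add_pow_mul_smul_le (h0 : 0 ≤ r) (h1 : r ≤ 1) (hC : ∀ n : ℕ, n * r ^ n ≤ C)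
    (q P : E) (c₀ c : ℝ) (n : ℕ) :
    ‖q + (r ^ n * (c₀ + n * c)) • P‖ ≤ ‖q‖ + (|c₀| + |c| * C) * ‖P‖ := by
  calc _ ≤ ‖q‖ + |r ^ n * (c₀ + n * c)| * ‖P‖ := by
        rw [← Real.norm_eq_abs, ← norm_smul]
        exact norm_add_le _ _
    _ ≤ _ := by gcongr; exact abs_pow_mul_add_le h0 h1 hC le_rfl n c

theorem norm_add_smul_add_pow_mul_smul_le (h0 : 0 ≤ r) (h1 : r ≤ 1)
    (hC : ∀ n : ℕ, n * r ^ n ≤ C) {a α : ℝ} {M : ℕ} (ha : a + M * α ∈ Set.Ico 0 α)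
    (p A m : E) (d₀ τ : ℝ) :
    ‖p + (a + M * α) • A + (r ^ M * (d₀ + a * τ)) • m‖ ≤
      ‖p‖ + α * ‖A‖ + (|d₀| + α * |τ| + |α * τ| * C) * ‖m‖ := by
  obtain ⟨hy0, hyα⟩ := ha
  have hd : d₀ + a * τ = (d₀ + (a + M * α) * τ) + M * -(α * τ) := by ring
  have hu : |d₀ + (a + M * α) * τ| ≤ |d₀| + α * |τ| := by
    refine (abs_add_le _ _).trans ?_
    rw [abs_mul, abs_of_nonneg hy0]
    gcongr
  calc _ ≤ ‖p‖ + |a + M * α| * ‖A‖ + |r ^ M * (d₀ + a * τ)| * ‖m‖ := by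
        rw [← Real.norm_eq_abs, ← Real.norm_eq_abs, ← norm_smul, ← norm_smul]
        exact norm_add₃_le
    _ ≤ _ := by
        rw [abs_of_nonneg hy0, hd, ← abs_neg (α * τ)]
        gcongr
        exact abs_pow_mul_add_le h0 h1 hC hu M _

end NormBounds

def ActsProperlyDiscontinuously {X : Type*} [TopologicalSpace X] (G : Subgroup (Equiv.Perm X)) :
    Prop :=
  ∀ K : Set X, IsCompact K → {w : G | ((fun x => (w : Equiv.Perm X) x) '' K ∩ K).Nonempty}.Finite

theorem not_actsProperlyDiscontinuously_of_injective {X : Type*} [TopologicalSpace X]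
    {G : Subgroup (Equiv.Perm X)} {K : Set X} (hK : IsCompact K) {w : ℕ → Equiv.Perm X}
    (hwG : ∀ k, w k ∈ G) (hw : Function.Injective w) {x : ℕ → X} (hx : ∀ k, x k ∈ K)
    (hwx : ∀ k, w k (x k) ∈ K) : ¬ ActsProperlyDiscontinuously G := fun hG =>
  Set.infinite_of_injective_forall_mem (f := fun k => (⟨w k, hwG k⟩ : G))
    (fun _ _ h => hw (congrArg Subtype.val h))
    (fun k => Set.mem_ofPred.2 ⟨_, ⟨x k, hx k, rfl⟩, hwx k⟩) (hG K hK)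

/-- `γ = g (·) + v` with `g` hyperbolic, `(A, m, P)` playing the role of `(x⁰(g), x⁻(g), x⁺(g))`
and `l` that of `λ`; thus `ldot v A` is the Margulis invariant `α(γ)`. -/
structure IsHyperbolicAffine (γ : Equiv.Perm (Fin 3 → ℝ)) (g : Matrix (Fin 3) (Fin 3) ℝ)
    (v A m P : Fin 3 → ℝ) (l : ℝ) : Prop where
  apply_eq : ∀ x, γ x = g *ᵥ x + v
  preservesLdot : PreservesLdot g
  frame : IsLorentzFrame A m P
  mulVec_A : g *ᵥ A = A
  mulVec_m : g *ᵥ m = l • m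
  mulVec_P : g *ᵥ P = l⁻¹ • P
  pos : 0 < l
  lt_one : l < 1

theorem IsNullFrameOf.isHyperbolicAffine {γ : Equiv.Perm (Fin 3 → ℝ)}
    {g : Matrix (Fin 3) (Fin 3) ℝ} {v x0 xm xp : Fin 3 → ℝ} (hg : PreservesLdot g)
    (hf : IsNullFrameOf g x0 xm xp) (hγ : ∀ x, γ x = g *ᵥ x + v) :
    ∃ l, IsHyperbolicAffine γ g v x0 xm xp l := by
  obtain ⟨hx0, hx0x0, hxm, -, hxp, -, l, hl0, hl1, hgxm, hgxp, hdet⟩ := hf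
  have hfix : g *ᵥ x0 = (1 : ℝ) • x0 := by rw [one_smul, hx0]
  refine ⟨l, hγ, hg, ⟨hx0x0, ?_, ?_, hxm, hxp, hdet⟩, hx0, hgxm, hgxp, hl0, hl1⟩
  · exact hg.ldot_eq_zero_of_mulVec_eq_smul hfix hgxm (by rw [one_mul]; exact hl1.ne)
  · refine hg.ldot_eq_zero_of_mulVec_eq_smul hfix hgxp ?_
    rw [one_mul, Ne, inv_eq_one]
    exact hl1.ne

namespace IsHyperbolicAffine

variable {γ η : Equiv.Perm (Fin 3 → ℝ)} {g h : Matrix (Fin 3) (Fin 3) ℝ}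
  {v w A m P B m' P' : Fin 3 → ℝ} {l μ : ℝ}

theorem exists_axis (hγ : IsHyperbolicAffine γ g v A m P l) : ∃ p, γ p = p + ldot v A • A := by
  have hv := hγ.frame.expand v
  set k := ldot m P
  set c₁ := ldot v P / k
  set c₂ := ldot v m / k
  have hl := hγ.pos.ne'
  have h1 : 1 - l ≠ 0 := sub_ne_zero.2 hγ.lt_one.ne'
  have h2 : l - 1 ≠ 0 := sub_ne_zero.2 hγ.lt_one.ne
  refine ⟨(c₁ / (1 - l)) • m + (c₂ / (1 - l⁻¹)) • P, ?_⟩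
  rw [hγ.apply_eq, mulVec_add, mulVec_smul, mulVec_smul, hγ.mulVec_m,
    hγ.mulVec_P]
  conv_lhs => rw [hv]
  match_scalars <;> field_simp <;> ring

theorem apply_add (hγ : IsHyperbolicAffine γ g v A m P l) {p : Fin 3 → ℝ}
    (hp : γ p = p + ldot v A • A) (a d e : ℝ) :
    γ (p + a • A + d • m + e • P) = p + (a + ldot v A) • A + (l * d) • m + (l⁻¹ * e) • P := by
  rw [hγ.apply_eq] at hp ⊢
  simp only [mulVec_add, mulVec_smul, hγ.mulVec_A, hγ.mulVec_m, hγ.mulVec_P]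
  linear_combination (norm := module) hp

theorem pow_apply (hγ : IsHyperbolicAffine γ g v A m P l) {p : Fin 3 → ℝ}
    (hp : γ p = p + ldot v A • A) (n : ℕ) (a d e : ℝ) :
    (γ ^ n) (p + a • A + d • m + e • P) =
      p + (a + n * ldot v A) • A + (l ^ n * d) • m + (l⁻¹ ^ n * e) • P := by
  induction n generalizing a d e with
  | zero => simp
  | succ n ih =>
    rw [pow_succ, Equiv.Perm.mul_apply, hγ.apply_add hp, ih]
    push_cast
    match_scalars <;> ring

theorem isUnit_det (hγ : IsHyperbolicAffine γ g v A m P l) : IsUnit g.det := by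
  refine (Matrix.isUnit_iff_isUnit_det g).1 (mulVec_surjective_iff_isUnit.1 fun y => ?_)
  refine ⟨γ⁻¹ (y + v), add_right_cancel (b := v) ?_⟩
  rw [← hγ.apply_eq, ← Equiv.Perm.eq_inv_iff_eq]

theorem inv_mulVec_mulVec (hγ : IsHyperbolicAffine γ g v A m P l) (x : Fin 3 → ℝ) :
    g⁻¹ *ᵥ (g *ᵥ x) = x := by
  rw [mulVec_mulVec, nonsing_inv_mul _ hγ.isUnit_det, one_mulVec]

theorem mulVec_inv_mulVec (hγ : IsHyperbolicAffine γ g v A m P l) (x : Fin 3 → ℝ) :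
    g *ᵥ (g⁻¹ *ᵥ x) = x := by
  rw [mulVec_mulVec, mul_nonsing_inv _ hγ.isUnit_det, one_mulVec]

theorem inv_mulVec_eq_smul (hγ : IsHyperbolicAffine γ g v A m P l) {x : Fin 3 → ℝ} {c : ℝ}
    (hc : c ≠ 0) (hx : g *ᵥ x = c • x) : g⁻¹ *ᵥ x = c⁻¹ • x := by
  calc g⁻¹ *ᵥ x = g⁻¹ *ᵥ (g *ᵥ (c⁻¹ • x)) := by
        rw [mulVec_smul, hx, smul_smul, inv_mul_cancel₀ hc, one_smul]
    _ = c⁻¹ • x := hγ.inv_mulVec_mulVec _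

theorem inv (hγ : IsHyperbolicAffine γ g v A m P l) :
    IsHyperbolicAffine γ⁻¹ g⁻¹ (-(g⁻¹ *ᵥ v)) (-A) P m l where
  apply_eq x := by
    rw [Equiv.Perm.inv_eq_iff_eq, hγ.apply_eq, mulVec_add, mulVec_neg, hγ.mulVec_inv_mulVec,
      hγ.mulVec_inv_mulVec, neg_add_cancel_right]
  preservesLdot x y := by rw [← hγ.preservesLdot, hγ.mulVec_inv_mulVec, hγ.mulVec_inv_mulVec]
  frame := hγ.frame.neg_swap
  mulVec_A := by rw [mulVec_neg, hγ.inv_mulVec_eq_smul one_ne_zero (by rw [one_smul, hγ.mulVec_A]),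
    inv_one, one_smul]
  mulVec_m := by rw [hγ.inv_mulVec_eq_smul (inv_ne_zero hγ.pos.ne') hγ.mulVec_P, inv_inv]
  mulVec_P := hγ.inv_mulVec_eq_smul hγ.pos.ne' hγ.mulVec_m
  pos := hγ.pos
  lt_one := hγ.lt_one

theorem ldot_inv (hγ : IsHyperbolicAffine γ g v A m P l) :
    ldot (-(g⁻¹ *ᵥ v)) (-A) = ldot v A := by
  rw [ldot_neg_left, ldot_neg_right, neg_neg, ← hγ.preservesLdot, hγ.mulVec_inv_mulVec,
    hγ.mulVec_A]

theorem pow_mul_pow_ne_one (hγ : IsHyperbolicAffine γ g v A m P l)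
    (hη : IsHyperbolicAffine η h w B m' P' μ) (hk : ldot m P' ≠ 0) {a : ℕ} (ha : a ≠ 0) (b : ℕ) :
    γ ^ a * η ^ b ≠ 1 := by
  intro hab
  obtain ⟨u, hu⟩ := exists_pow_apply_eq_mulVec_add hγ.apply_eq a
  obtain ⟨u', hu'⟩ := exists_pow_apply_eq_mulVec_add hη.apply_eq b
  have hfix : ∀ x, (g ^ a) *ᵥ ((h ^ b) *ᵥ x) + ((g ^ a) *ᵥ u' + u) = x := fun x => by
    have := congrArg (· x) hab
    simp only [Equiv.Perm.mul_apply, hu, hu', mulVec_add, Equiv.Perm.one_apply] at this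
    rwa [← add_assoc]
  have h0 : (g ^ a) *ᵥ u' + u = 0 := by simpa using hfix 0
  have hP' : (g ^ a) *ᵥ P' = μ ^ b • P' := by
    have := hfix (μ ^ b • P')
    rwa [h0, add_zero, mulVec_smul, pow_mulVec_eq_smul hη.mulVec_P, smul_smul, inv_pow,
      mul_inv_cancel₀ (pow_ne_zero _ hη.pos.ne'), one_smul] at this
  refine hk ((hγ.preservesLdot.pow a).ldot_eq_zero_of_mulVec_eq_smul
    (pow_mulVec_eq_smul hγ.mulVec_m a) hP' (mul_lt_one_of_nonneg_of_lt_one_left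
      (pow_nonneg hγ.pos.le a) (pow_lt_one₀ hγ.pos.le hγ.lt_one ha)
      (pow_le_one₀ hη.pos.le hη.lt_one.le)).ne)

theorem injective_pow_mul_pow (hγ : IsHyperbolicAffine γ g v A m P l)
    (hη : IsHyperbolicAffine η h w B m' P' μ) (hk : ldot m P' ≠ 0) {M n : ℕ → ℕ}
    (hM : StrictMono M) (hn : Monotone n) : Function.Injective fun k => γ ^ M k * η ^ n k := by
  intro i j hij
  by_contra hne
  wlog hlt : i < j generalizing i j
  · exact this hij.symm (Ne.symm hne) ((not_lt.1 hlt).lt_of_ne' hne)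
  obtain ⟨a, ha⟩ := Nat.exists_eq_add_of_lt (hM hlt)
  obtain ⟨b, hb⟩ := Nat.exists_eq_add_of_le (hn hlt.le)
  refine hγ.pow_mul_pow_ne_one hη hk a.add_one_ne_zero b ?_
  simp only at hij
  rw [ha, hb, add_assoc, pow_add γ (M i), add_comm (n i), pow_add η b, mul_assoc,
    ← mul_assoc (γ ^ (a + 1))] at hij
  simpa using (mul_left_cancel hij).symm

theorem pow_mul_pow_apply_of_line (hγ : IsHyperbolicAffine γ g v A m P l)
    (hη : IsHyperbolicAffine η h w B m' P' μ) {p q : Fin 3 → ℝ} (hp : γ p = p + ldot v A • A)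
    (hq : η q = q + ldot w B • B) {σ a₀ c₀ ε d₀ τ : ℝ}
    (hline : ∀ s : ℝ,
      q + s • B + (c₀ + s * ε) • P' = p + (a₀ + s * σ) • A + (d₀ + (a₀ + s * σ) * τ) • m)
    (M n : ℕ) :
    (γ ^ M * η ^ n) (q + (μ ^ n * (c₀ + n * ldot w B * ε)) • P') =
      p + (a₀ + n * ldot w B * σ + M * ldot v A) • A +
        (l ^ M * (d₀ + (a₀ + n * ldot w B * σ) * τ)) • m := by
  have hηn := hη.pow_apply hq n 0 0 (μ ^ n * (c₀ + n * ldot w B * ε))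
  simp only [zero_smul, add_zero, zero_add, mul_zero, inv_pow,
    inv_mul_cancel_left₀ (pow_ne_zero n hη.pos.ne')] at hηn
  have hγn := hγ.pow_apply hp M (a₀ + n * ldot w B * σ) (d₀ + (a₀ + n * ldot w B * σ) * τ) 0
  simp only [zero_smul, add_zero, mul_zero] at hγn
  rw [Equiv.Perm.mul_apply, hηn, hline, hγn]

open Filter in
theorem not_actsProperlyDiscontinuously_of_transverse {G : Subgroup (Equiv.Perm (Fin 3 → ℝ))}
    (hγ : IsHyperbolicAffine γ g v A m P l) (hη : IsHyperbolicAffine η h w B m' P' μ)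
    (hα : 0 < ldot v A) (hβ : ldot w B < 0) (hk : ldot m P' ≠ 0) (hγG : γ ∈ G) (hηG : η ∈ G) :
    ¬ ActsProperlyDiscontinuously G := by
  obtain ⟨p, hp⟩ := hγ.exists_axis
  obtain ⟨q, hq⟩ := hη.exists_axis
  obtain ⟨σ, hσ, a₀, c₀, ε, d₀, τ, hline⟩ := hγ.frame.exists_common_line hη.frame hk p q
  set α := ldot v A
  set β := ldot w B
  -- `a n` is the `A`-coordinate of the point of the common line with `B`-coordinate `n β`.
  set a : ℕ → ℝ := fun n => a₀ + n * β * σ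
  set M : ℕ → ℕ := fun n => ⌈-a n / α⌉₊
  have ha : Tendsto a atTop atBot := by
    refine tendsto_atBot_add_const_left _ _ ?_
    simpa only [mul_assoc] using
      tendsto_natCast_atTop_atTop.atTop_mul_const_of_neg (mul_neg_of_neg_of_pos hβ hσ)
  obtain ⟨φ, hφ, hMφ, haφ⟩ := exists_strictMono_subseq_natCeil hα ha
  obtain ⟨Cl, hCl⟩ := exists_natCast_mul_pow_le hγ.pos.le hγ.lt_one
  obtain ⟨Cμ, hCμ⟩ := exists_natCast_mul_pow_le hη.pos.le hη.lt_one
  set R₁ := ‖q‖ + (|c₀| + |β * ε| * Cμ) * ‖P'‖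
  set R₂ := ‖p‖ + α * ‖A‖ + (|d₀| + α * |τ| + |α * τ| * Cl) * ‖m‖
  refine not_actsProperlyDiscontinuously_of_injective
    (isCompact_closedBall (0 : Fin 3 → ℝ) (max R₁ R₂)) (w := fun k => γ ^ M (φ k) * η ^ φ k)
    (x := fun k => q + (μ ^ φ k * (c₀ + φ k * β * ε)) • P')
    (fun k => mul_mem (pow_mem hγG _) (pow_mem hηG _))
    (hγ.injective_pow_mul_pow hη hk hMφ hφ.monotone) (fun k => ?_) (fun k => ?_)
  · refine mem_closedBall_zero_iff.2 (le_max_of_le_left ?_)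
    simpa only [mul_assoc] using
      norm_add_pow_mul_smul_le hη.pos.le hη.lt_one.le hCμ q P' c₀ (β * ε) (φ k)
  · refine mem_closedBall_zero_iff.2 (le_max_of_le_right ?_)
    rw [hγ.pow_mul_pow_apply_of_line hη hp hq hline]
    exact norm_add_smul_add_pow_mul_smul_le hγ.pos.le hγ.lt_one.le hCl
      (add_natCeil_neg_div_mul_mem_Ico hα (haφ k)) p A m d₀ τ

end IsHyperbolicAffine

theorem IsHyperbolicAffine.not_actsProperlyDiscontinuously {γ η : Equiv.Perm (Fin 3 → ℝ)}
    {g h : Matrix (Fin 3) (Fin 3) ℝ} {v w A m P B m' P' : Fin 3 → ℝ} {l μ : ℝ}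
    {G : Subgroup (Equiv.Perm (Fin 3 → ℝ))}
    (hγ : IsHyperbolicAffine γ g v A m P l) (hη : IsHyperbolicAffine η h w B m' P' μ)
    (hα : 0 < ldot v A) (hβ : ldot w B < 0) (hγG : γ ∈ G) (hηG : η ∈ G) :
    ¬ ActsProperlyDiscontinuously G := by
  by_cases hk : ldot m P' = 0
  · have hk' : ldot m m' ≠ 0 := hγ.frame.null_m.ldot_ne_zero_of_ldot_eq_zero hη.frame.null_m
      hη.frame.null_P hη.frame.ldot_m_P_neg.ne hk
    exact hγ.not_actsProperlyDiscontinuously_of_transverse hη.inv hα (by rwa [hη.ldot_inv]) hk'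
      hγG (inv_mem hηG)
  · exact hγ.not_actsProperlyDiscontinuously_of_transverse hη hα hβ hk hγG hηG

/-- Margulis' criterion: if γ : x ↦ g x + v_g and η : x ↦ h x + v_h are hyperbolic
affine isometries whose Margulis invariants α(γ) = ⟨v_g, x⁰(g)⟩ and
α(η) = ⟨v_h, x⁰(h)⟩ have opposite signs, then ⟨γ, η⟩ does not act properly
discontinuously on ℝ^{2,1}. -/
theorem stmt_17 (g h : Matrix (Fin 3) (Fin 3) ℝ) (hg : IsSOplus g) (hh : IsSOplus h)
    (vg vh x0g xmg xpg x0h xmh xph : Fin 3 → ℝ)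
    (hfg : IsNullFrameOf g x0g xmg xpg) (hfh : IsNullFrameOf h x0h xmh xph)
    (γ η : Equiv.Perm (Fin 3 → ℝ))
    (hγ : ∀ x, γ x = g.mulVec x + vg) (hη : ∀ x, η x = h.mulVec x + vh)
    (hsign : ldot vg x0g * ldot vh x0h < 0) :
    ¬ ∀ K : Set (Fin 3 → ℝ), IsCompact K →
        {w : Subgroup.closure ({γ, η} : Set (Equiv.Perm (Fin 3 → ℝ))) |
          ((fun x => (w : Equiv.Perm (Fin 3 → ℝ)) x) '' K ∩ K).Nonempty}.Finite := by
  obtain ⟨l, hγ'⟩ := hfg.isHyperbolicAffine hg.1 hγ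
  obtain ⟨μ, hη'⟩ := hfh.isHyperbolicAffine hh.1 hη
  have hγG : γ ∈ Subgroup.closure {γ, η} := Subgroup.subset_closure (by simp)
  have hηG : η ∈ Subgroup.closure {γ, η} := Subgroup.subset_closure (by simp)
  rcases mul_neg_iff.1 hsign with ⟨hα, hβ⟩ | ⟨hα, hβ⟩
  · exact hγ'.not_actsProperlyDiscontinuously hη' hα hβ hγG hηG
  · exact hη'.not_actsProperlyDiscontinuously hγ' hβ hα hηG hγG
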